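/- Let T be a triangulated category, and let E be an object equipped with a tower ⋯ → f_{n+1}E → f_n E → ⋯ → f_0 E → E such that the cofiber of f_{n+1}E → f_n E is the n-th slice s_n E. If s_{-n}(E) = 0 for all n > 0 and the canonical map hocolim_{n→∞} f_{-n}(E) → E is an isomorphism, then the map f_0(E) → E is an isomorphism. -/

import Mathlib

/-!
Vanishing of the slices makes every map `f_{-n}E → f_{-n-1}E` of the tower an isomorphism.
Inverting the tower gives a retraction `∐ f_{-n}E → f₀E` of the inclusion of the zeroth
summand which kills the telescope map `𝟙 - shift`, and partial sums of the inverted tower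
give a left inverse of the telescope map. So in the triangle defining the homotopy colimit
the telescope map is a split monomorphism, the next map is an epimorphism, and the zeroth
summand `f₀E → hocolim` is an isomorphism; composing with `hocolim ≅ E` gives `f₀E ≅ E`.
-/

open CategoryTheory Limits Pretriangulated

theorem CategoryTheory.Pretriangulated.isIso_comp_of_distTriang_of_retraction {C : Type*}
    [Category C] [Preadditive C] [HasZeroObject C] [HasShift C ℤ]
    [∀ n : ℤ, (shiftFunctor C n).Additive] [Pretriangulated C]
    {A B Z X : C} {f : A ⟶ B} {π : B ⟶ Z} {δ : Z ⟶ A⟦(1 : ℤ)⟧}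
    (hT : Triangle.mk f π δ ∈ distTriang C) [Mono f] (i : X ⟶ B) (r : B ⟶ X)
    (hir : i ≫ r = 𝟙 X) (hr : f ≫ r = 0) (hri : r ≫ i ≫ π = π) :
    IsIso (i ≫ π) := by
  obtain ⟨v, hv⟩ : ∃ v : Z ⟶ X, r = π ≫ v := Triangle.yoneda_exact₂ _ hT r hr
  have : Epi π := Triangle.epi₂ _ hT (Triangle.mor₃_eq_zero_of_mono₁ _ hT ‹Mono f›)
  refine ⟨v, by rw [Category.assoc, ← hv, hir], ?_⟩
  rw [← cancel_epi π, ← Category.assoc, ← hv, hri, Category.comp_id]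

noncomputable section

namespace CategoryTheory.Limits

variable {C : Type*} [Category C] {F : ℕ → C} (g : ∀ n, F n ⟶ F (n + 1)) [HasCoproduct F]

section Retraction

variable [∀ n, IsIso (g n)]

def towerInvToZero : ∀ n, F n ⟶ F 0
  | 0 => 𝟙 _
  | n + 1 => inv (g n) ≫ towerInvToZero n

def telescopeRetraction : ∐ F ⟶ F 0 :=
  Sigma.desc (towerInvToZero g)

theorem ι_zero_telescopeRetraction : Sigma.ι F 0 ≫ telescopeRetraction g = 𝟙 (F 0) := by
  simp [telescopeRetraction, towerInvToZero]

end Retraction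

variable [Preadditive C]

def telescopeDiff : ∐ F ⟶ ∐ F :=
  𝟙 _ - Sigma.desc fun n => g n ≫ Sigma.ι F (n + 1)

@[simp]
theorem ι_telescopeDiff (n : ℕ) :
    Sigma.ι F n ≫ telescopeDiff g = Sigma.ι F n - g n ≫ Sigma.ι F (n + 1) := by
  simp [telescopeDiff]

theorem ι_comp_eq_of_telescopeDiff_comp_eq_zero {Y : C} {π : ∐ F ⟶ Y}
    (hπ : telescopeDiff g ≫ π = 0) (n : ℕ) :
    Sigma.ι F n ≫ π = g n ≫ Sigma.ι F (n + 1) ≫ π := by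
  have h := congrArg (Sigma.ι F n ≫ ·) hπ
  rwa [← Category.assoc, ι_telescopeDiff, Preadditive.sub_comp, comp_zero, sub_eq_zero,
    Category.assoc] at h

variable [∀ n, IsIso (g n)]

theorem telescopeDiff_telescopeRetraction : telescopeDiff g ≫ telescopeRetraction g = 0 := by
  ext n
  rw [← Category.assoc, ι_telescopeDiff]
  simp [telescopeRetraction, towerInvToZero]

theorem telescopeRetraction_ι_zero_comp {Y : C} {π : ∐ F ⟶ Y} (hπ : telescopeDiff g ≫ π = 0) :
    telescopeRetraction g ≫ Sigma.ι F 0 ≫ π = π := by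
  ext n
  induction n with
  | zero => simp [telescopeRetraction, towerInvToZero]
  | succ n ih =>
    simp only [telescopeRetraction, Sigma.ι_desc_assoc, towerInvToZero, Category.assoc] at ih ⊢
    rw [ih, ι_comp_eq_of_telescopeDiff_comp_eq_zero g hπ, IsIso.inv_hom_id_assoc]

/-- Up to sign, `∑_{k<n} ι_k ∘ (F n ≅ F k)`, so that `telescopeDiff` telescopes against it. -/
def telescopeLeftInvComponent : ∀ n, F n ⟶ ∐ F
  | 0 => 0
  | n + 1 => inv (g n) ≫ (telescopeLeftInvComponent n - Sigma.ι F n)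

theorem telescopeDiff_desc_telescopeLeftInvComponent :
    telescopeDiff g ≫ Sigma.desc (telescopeLeftInvComponent g) = 𝟙 (∐ F) := by
  ext n
  rw [← Category.assoc, ι_telescopeDiff]
  simp [telescopeLeftInvComponent]

instance : Mono (telescopeDiff g) :=
  SplitMono.mono ⟨_, telescopeDiff_desc_telescopeLeftInvComponent g⟩

end CategoryTheory.Limits

end

/-- Slice filtration convergence: if all negative slices vanish and the homotopy
colimit of the tower `f₀E → f₋₁E → ⋯` maps isomorphically to `E`, then
`f₀E → E` is an isomorphism. -/
theorem stmt11 {T : Type*} [Category T] [Preadditive T] [HasZeroObject T]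
    [HasShift T ℤ] [∀ n : ℤ, (shiftFunctor T n).Additive] [Pretriangulated T]
    [HasCoproductsOfShape ℕ T]
    (E : T) (Fm : ℕ → T) (g : ∀ n : ℕ, Fm n ⟶ Fm (n + 1))
    (Sl : ℕ → T) (p : ∀ n : ℕ, Fm (n + 1) ⟶ Sl n)
    (d : ∀ n : ℕ, Sl n ⟶ (Fm n)⟦(1 : ℤ)⟧)
    (hdist : ∀ n, Triangle.mk (g n) (p n) (d n) ∈ distTriang T)
    (hzero : ∀ n, IsZero (Sl n))
    (e : ∀ n : ℕ, Fm n ⟶ E) (hcompat : ∀ n, e n = g n ≫ e (n + 1))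
    (H : T) (π : (∐ Fm) ⟶ H) (δ : H ⟶ (∐ Fm)⟦(1 : ℤ)⟧)
    (hH : Triangle.mk
        (𝟙 (∐ Fm) - Sigma.desc (fun n => g n ≫ Sigma.ι Fm (n + 1))) π δ
      ∈ distTriang T)
    (h : H ⟶ E) (hfac : ∀ n, Sigma.ι Fm n ≫ π ≫ h = e n)
    (hiso : IsIso h) :
    IsIso (e 0) := by
  have : ∀ n, IsIso (g n) := fun n => (Triangle.isZero₃_iff_isIso₁ _ (hdist n)).1 (hzero n)
  have hπ : telescopeDiff g ≫ π = 0 := comp_distTriang_mor_zero₁₂ _ hH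
  have : IsIso (Sigma.ι Fm 0 ≫ π) :=
    isIso_comp_of_distTriang_of_retraction (f := telescopeDiff g) hH _ (telescopeRetraction g)
      (ι_zero_telescopeRetraction g) (telescopeDiff_telescopeRetraction g)
      (telescopeRetraction_ι_zero_comp g hπ)
  rw [← hfac 0, ← Category.assoc]
  infer_instance
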